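/- Let C ∈ Λ satisfy ⟨C,C⟩ = 2 and ⟨C,K⟩ = −4. Then for every D ∈ Λ the following identity holds in Λ: D + Σ_{E} ⟨D,E⟩·E = Σ_{(F,G)} ⟨D,F⟩·G, where the first sum runs over all line classes E with ⟨C,E⟩ = 0, and the second sum runs over all ordered pairs (F,G) of fiber classes with F + G = C. -/

import Mathlib

/-!
Reverse Cauchy–Schwarz against `K` gives `⟨C, L⟩ ∈ {0, 1, 2, 3}` for every line `L`. The first three
moments of `⟨C, ·⟩` over the 27 lines depend only on `⟨C, C⟩` and `⟨C, K⟩`, and they force exactly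
five lines with `⟨C, L⟩ = 0` and two with `⟨C, L⟩ = 3`. The latter are `-K - F` and `-K - G`, where
`F`, `G = C - F` are the only fibers with `⟨C, F⟩ = 1`, i.e. the only ones occurring in a pair
`F + G = C`. Now `F`, `G` span a hyperbolic plane, and the five lines are orthogonal to it and to
each other because the form is negative definite on `C^⊥`. So `F`, `G` and the five lines form a
basis of `Λ` with dual basis `G`, `F` and the negated lines, and the identity is the expansion of
`D` in it.
-/

/-- The Picard lattice of the cubic surface: free ℤ-module of rank 7
with basis h, e₁, …, e₆ (coordinates: index 0 ↦ coefficient of h,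
index i+1 ↦ coefficient of eᵢ). -/
abbrev Lam : Type := Fin 7 → ℤ

/-- The intersection form: ⟨h,h⟩ = 1, ⟨eᵢ,eᵢ⟩ = −1, distinct basis vectors orthogonal. -/
def ip (x y : Lam) : ℤ := x 0 * y 0 - ∑ i : Fin 6, x i.succ * y i.succ

/-- The canonical class K = −3h + e₁ + ⋯ + e₆. -/
def Kc : Lam := ![-3, 1, 1, 1, 1, 1, 1]

/-- A line class: x with ⟨x,x⟩ = −1 and ⟨x,K⟩ = −1. -/
def IsLine (x : Lam) : Prop := ip x x = -1 ∧ ip x Kc = -1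

/-- A fiber class: x with ⟨x,x⟩ = 0 and ⟨x,K⟩ = −2. -/
def IsFiber (x : Lam) : Prop := ip x x = 0 ∧ ip x Kc = -2

open Finset Matrix

theorem Matrix.sum_dotProduct_mulVec_smul_eq_self {m n R : Type*} [Fintype m] [Fintype n]
    [DecidableEq m] [DecidableEq n] [CommRing R] (hcard : Fintype.card m = Fintype.card n)
    (J : Matrix n n R) (v w : m → n → R)
    (hvw : ∀ i j, v i ⬝ᵥ (J *ᵥ w j) = if i = j then 1 else 0) (x : n → R) :
    ∑ i, (v i ⬝ᵥ (J *ᵥ x)) • w i = x := by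
  have hgram : of v * (J * (of w)ᵀ) = 1 := by
    ext i j
    rw [one_apply, ← hvw]
    simp [mul_apply, dotProduct, mulVec, Finset.mul_sum]
  have hinv : (of w)ᵀ * of v * J = 1 := by
    rw [mul_eq_one_comm_of_card_eq _ _ _ hcard, Matrix.mul_assoc] at hgram
    rwa [mul_eq_one_comm]
  calc ∑ i, (v i ⬝ᵥ (J *ᵥ x)) • w i = (of w)ᵀ *ᵥ (of v *ᵥ (J *ᵥ x)) := by
        rw [mulVec_transpose, vecMul_eq_sum]; rfl
    _ = x := by rw [mulVec_mulVec, mulVec_mulVec, hinv, one_mulVec]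

theorem ip_eq_dotProduct_mulVec (x y : Lam) :
    ip x y = x ⬝ᵥ (diagonal (Fin.cons 1 fun _ => -1) *ᵥ y) := by
  simp [ip, dotProduct, Fin.sum_univ_succ, mulVec_diagonal]
  ring

theorem ip_expand (x y : Lam) : ip x y = x 0 * y 0 -
    (x 1 * y 1 + x 2 * y 2 + x 3 * y 3 + x 4 * y 4 + x 5 * y 5 + x 6 * y 6) := by
  simp [ip, Fin.sum_univ_six]

theorem ip_comm (x y : Lam) : ip x y = ip y x := by
  simp only [ip_expand]; ring

theorem ip_add_left (x y z : Lam) : ip (x + y) z = ip x z + ip y z := by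
  simp only [ip_expand, Pi.add_apply]; ring

theorem ip_add_right (x y z : Lam) : ip x (y + z) = ip x y + ip x z := by
  simp only [ip_expand, Pi.add_apply]; ring

theorem ip_sub_left (x y z : Lam) : ip (x - y) z = ip x z - ip y z := by
  simp only [ip_expand, Pi.sub_apply]; ring

theorem ip_sub_right (x y z : Lam) : ip x (y - z) = ip x y - ip x z := by
  simp only [ip_expand, Pi.sub_apply]; ring

theorem ip_neg_left (x y : Lam) : ip (-x) y = -ip x y := by
  simp only [ip_expand, Pi.neg_apply]; ring

theorem ip_neg_right (x y : Lam) : ip x (-y) = -ip x y := by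
  simp only [ip_expand, Pi.neg_apply]; ring

theorem ip_smul_left (c : ℤ) (x y : Lam) : ip (c • x) y = c * ip x y := by
  simp only [ip_expand, Pi.smul_apply, smul_eq_mul]; ring

theorem ip_smul_right (c : ℤ) (x y : Lam) : ip x (c • y) = c * ip x y := by
  simp only [ip_expand, Pi.smul_apply, smul_eq_mul]; ring

theorem sum_ip_smul_eq_self_of_dual {ι : Type*} [Fintype ι] [DecidableEq ι]
    (hcard : Fintype.card ι = 7) (v w : ι → Lam)
    (hvw : ∀ i j, ip (v i) (w j) = if i = j then 1 else 0) (x : Lam) :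
    ∑ i, ip (v i) x • w i = x := by
  simp only [ip_eq_dotProduct_mulVec] at hvw ⊢
  exact sum_dotProduct_mulVec_smul_eq_self (by rw [hcard, Fintype.card_fin]) _ v w hvw x

theorem ip_Kc_Kc : ip Kc Kc = 3 := by decide

theorem ip_Kc_pos : 0 < ip Kc Kc := by decide

theorem ip_Kc (x : Lam) : ip x Kc = -3 * x 0 - ∑ i : Fin 6, x i.succ := by
  simp [ip, Kc, Fin.sum_univ_succ]
  ring

theorem ip_single_succ (x : Lam) (i : Fin 6) : ip x (Pi.single i.succ 1) = -x i.succ := by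
  simp [ip, Pi.single_apply, Fin.succ_ne_zero]

/-- Reverse Cauchy–Schwarz: the form has signature `(1, 6)`. -/
theorem ip_self_neg_of_ip_eq_zero {x y : Lam} (hy : 0 < ip y y) (hxy : ip x y = 0) (hx : x ≠ 0) :
    ip x x < 0 := by
  unfold ip at hy hxy ⊢
  have hcs := sum_mul_sq_le_sq_mul_sq univ (fun i : Fin 6 => x i.succ) (fun i => y i.succ)
  simp only [← sq] at hy hxy hcs ⊢
  set a := ∑ i : Fin 6, x i.succ ^ 2
  set b := ∑ i : Fin 6, y i.succ ^ 2
  have ha : 0 ≤ a := sum_nonneg fun i _ => sq_nonneg _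
  have hb : 0 ≤ b := sum_nonneg fun i _ => sq_nonneg _
  have hxy' : ∑ i : Fin 6, x i.succ * y i.succ = x 0 * y 0 := by linarith
  rw [hxy', mul_pow] at hcs
  by_contra! hpos
  have hay : a * y 0 ^ 2 ≤ x 0 ^ 2 * y 0 ^ 2 := by nlinarith [sq_nonneg (y 0)]
  have ha0 : a = 0 := by nlinarith
  have hx0 : x 0 = 0 := by
    rw [ha0, zero_mul] at hcs
    have : x 0 ^ 2 * y 0 ^ 2 = 0 := le_antisymm hcs (by positivity)
    rcases mul_eq_zero.mp this with h | h
    · exact pow_eq_zero_iff two_ne_zero |>.mp h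
    · nlinarith
  refine hx (funext fun i => Fin.cases hx0 (fun i => ?_) i)
  exact pow_eq_zero_iff two_ne_zero |>.mp <|
    (sum_eq_zero_iff_of_nonneg fun i _ => sq_nonneg _).mp ha0 i (mem_univ i)

theorem ip_self_nonpos_of_ip_eq_zero {x y : Lam} (hy : 0 < ip y y) (hxy : ip x y = 0) :
    ip x x ≤ 0 := by
  rcases eq_or_ne x 0 with rfl | hx
  · simp [ip]
  · exact (ip_self_neg_of_ip_eq_zero hy hxy hx).le

theorem isFiber_iff_isLine_neg_Kc_sub (x : Lam) : IsFiber x ↔ IsLine (-Kc - x) := by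
  simp only [IsFiber, IsLine, ip_sub_left, ip_sub_right, ip_neg_left, ip_neg_right, ip_Kc_Kc,
    ip_comm Kc x]
  omega

theorem IsLine.neg_one_le_ip {L L' : Lam} (hL : IsLine L) (hL' : IsLine L') : -1 ≤ ip L L' := by
  have h := ip_self_nonpos_of_ip_eq_zero ip_Kc_pos (x := L - L')
    (by rw [ip_sub_left, hL.2, hL'.2]; ring)
  simp only [ip_sub_left, ip_sub_right, hL.1, hL'.1, ip_comm L' L] at h
  omega

theorem IsLine.ip_le_one {L L' : Lam} (hL : IsLine L) (hL' : IsLine L') : ip L L' ≤ 1 := by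
  have h := ip_self_nonpos_of_ip_eq_zero ip_Kc_pos (x := (3 : ℤ) • L + (3 : ℤ) • L' + (2 : ℤ) • Kc)
    (by simp only [ip_add_left, ip_smul_left, hL.2, hL'.2, ip_Kc_Kc]; ring)
  simp only [ip_add_left, ip_add_right, ip_smul_left, ip_smul_right, hL.1, hL'.1, hL.2, hL'.2,
    ip_Kc_Kc, ip_comm L' L, ip_comm Kc L, ip_comm Kc L'] at h
  omega

theorem IsLine.ip_nonneg_of_isFiber {L F : Lam} (hL : IsLine L) (hF : IsFiber F) :
    0 ≤ ip L F := by
  have h := hL.ip_le_one ((isFiber_iff_isLine_neg_Kc_sub F).mp hF)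
  rw [ip_sub_right, ip_neg_right, hL.2] at h
  omega

theorem isLine_single_succ (i : Fin 6) : IsLine (Pi.single i.succ 1) := by
  revert i; unfold IsLine; decide

theorem IsLine.coord_bounds {x : Lam} (hx : IsLine x) :
    0 ≤ x 0 ∧ x 0 ≤ 2 ∧ ∀ i : Fin 6, -1 ≤ x i.succ ∧ x i.succ ≤ 1 := by
  have hcs := sq_sum_le_card_mul_sum_sq (s := univ) (f := fun i : Fin 6 => x i.succ)
  have hsq : ip x x = x 0 ^ 2 - ∑ i : Fin 6, x i.succ ^ 2 := by simp only [ip, sq]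
  have h1 := hx.1
  have h2 := hx.2
  rw [hsq] at h1
  rw [ip_Kc] at h2
  simp only [card_univ, Fintype.card_fin, Nat.cast_ofNat] at hcs
  refine ⟨by nlinarith, by nlinarith, fun i => ?_⟩
  have hi := isLine_single_succ i
  have := hx.neg_one_le_ip hi
  have := hx.ip_le_one hi
  rw [ip_single_succ] at *
  omega

/-- The 27 lines `eᵢ`, `h - eᵢ - eⱼ` and `2h - ∑_{j ≠ i} eⱼ`. -/
def lineList : List Lam :=
  [![0, 1, 0, 0, 0, 0, 0], ![0, 0, 1, 0, 0, 0, 0], ![0, 0, 0, 1, 0, 0, 0],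
   ![0, 0, 0, 0, 1, 0, 0], ![0, 0, 0, 0, 0, 1, 0], ![0, 0, 0, 0, 0, 0, 1],
   ![1, -1, -1, 0, 0, 0, 0], ![1, -1, 0, -1, 0, 0, 0], ![1, -1, 0, 0, -1, 0, 0],
   ![1, -1, 0, 0, 0, -1, 0], ![1, -1, 0, 0, 0, 0, -1], ![1, 0, -1, -1, 0, 0, 0],
   ![1, 0, -1, 0, -1, 0, 0], ![1, 0, -1, 0, 0, -1, 0], ![1, 0, -1, 0, 0, 0, -1],
   ![1, 0, 0, -1, -1, 0, 0], ![1, 0, 0, -1, 0, -1, 0], ![1, 0, 0, -1, 0, 0, -1],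
   ![1, 0, 0, 0, -1, -1, 0], ![1, 0, 0, 0, -1, 0, -1], ![1, 0, 0, 0, 0, -1, -1],
   ![2, 0, -1, -1, -1, -1, -1], ![2, -1, 0, -1, -1, -1, -1], ![2, -1, -1, 0, -1, -1, -1],
   ![2, -1, -1, -1, 0, -1, -1], ![2, -1, -1, -1, -1, 0, -1], ![2, -1, -1, -1, -1, -1, 0]]

def lines : Finset Lam := lineList.toFinset

theorem lineList_nodup : lineList.Nodup := by decide

theorem sum_lines {M : Type*} [AddCommMonoid M] (f : Lam → M) :
    ∑ L ∈ lines, f L = (lineList.map f).sum :=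
  List.sum_toFinset f lineList_nodup

set_option maxRecDepth 100000 in
theorem isLine_box_mem_lineList : ∀ c ∈ Icc (0 : ℤ) 2, ∀ a₁ ∈ Icc (-1 : ℤ) 1,
    ∀ a₂ ∈ Icc (-1 : ℤ) 1, ∀ a₃ ∈ Icc (-1 : ℤ) 1, ∀ a₄ ∈ Icc (-1 : ℤ) 1,
    ∀ a₅ ∈ Icc (-1 : ℤ) 1, ∀ a₆ ∈ Icc (-1 : ℤ) 1,
    IsLine ![c, a₁, a₂, a₃, a₄, a₅, a₆] → ![c, a₁, a₂, a₃, a₄, a₅, a₆] ∈ lineList := by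
  unfold IsLine; decide

theorem isLine_iff_mem_lines {x : Lam} : IsLine x ↔ x ∈ lines := by
  refine ⟨fun hx => ?_, fun hx => ?_⟩
  · obtain ⟨h0, h0', hi⟩ := hx.coord_bounds
    have hx' : x = ![x 0, x 1, x 2, x 3, x 4, x 5, x 6] := by ext i; fin_cases i <;> rfl
    rw [hx'] at hx ⊢
    exact List.mem_toFinset.mpr <| isLine_box_mem_lineList _ (mem_Icc.2 ⟨h0, h0'⟩)
      _ (mem_Icc.2 (hi 0)) _ (mem_Icc.2 (hi 1)) _ (mem_Icc.2 (hi 2)) _ (mem_Icc.2 (hi 3))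
      _ (mem_Icc.2 (hi 4)) _ (mem_Icc.2 (hi 5)) hx
  · revert x; unfold IsLine lines; decide

theorem card_lines : #lines = 27 := by decide

theorem sum_lines_ip (x : Lam) : ∑ L ∈ lines, ip x L = -9 * ip x Kc := by
  simp [sum_lines, lineList, ip_expand, Kc]
  ring

theorem sum_lines_ip_sq (x : Lam) :
    ∑ L ∈ lines, ip x L ^ 2 = -6 * ip x x + 5 * ip x Kc ^ 2 := by
  simp [sum_lines, lineList, ip_expand, Kc]
  ring

theorem sum_lines_ip_cube (x : Lam) :
    ∑ L ∈ lines, ip x L ^ 3 = 6 * ip x x * ip x Kc - 3 * ip x Kc ^ 3 := by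
  simp [sum_lines, lineList, ip_expand, Kc]
  ring

section

variable {C : Lam}

theorem IsLine.ip_mem_Icc (hC2 : ip C C = 2) (hC4 : ip C Kc = -4) {L : Lam} (hL : IsLine L) :
    0 ≤ ip C L ∧ ip C L ≤ 3 := by
  obtain ⟨hLL, hLK⟩ := hL
  have := ip_comm C L
  have := ip_comm Kc L
  have := ip_comm Kc C
  constructor
  · by_contra! hneg
    have hx : L - C - Kc = 0 := by
      by_contra hx
      have h := ip_self_neg_of_ip_eq_zero ip_Kc_pos (x := L - C - Kc)
        (by simp only [ip_sub_left, hLK, hC4, ip_Kc_Kc]; norm_num) hx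
      simp only [ip_sub_left, ip_sub_right, ip_Kc_Kc] at h
      linarith
    rw [show L = C + Kc by rw [← sub_eq_zero, ← hx]; abel] at hLL
    simp only [ip_add_left, ip_add_right, ip_Kc_Kc] at hLL
    linarith
  · have h := ip_self_nonpos_of_ip_eq_zero ip_Kc_pos
      (x := (3 : ℤ) • L + (3 : ℤ) • C + (5 : ℤ) • Kc)
      (by simp only [ip_add_left, ip_smul_left, hLK, hC4, ip_Kc_Kc]; norm_num)
    simp only [ip_add_left, ip_add_right, ip_smul_left, ip_smul_right, ip_Kc_Kc] at h
    linarith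

theorem sum_lines_cubic_ip (hC2 : ip C C = 2) (hC4 : ip C Kc = -4) (a b c d : ℤ) :
    ∑ L ∈ lines, (a + b * ip C L + c * ip C L ^ 2 + d * ip C L ^ 3) =
      27 * a + 36 * b + 68 * c + 144 * d := by
  simp only [sum_add_distrib, ← mul_sum, sum_const, card_lines, sum_lines_ip, sum_lines_ip_sq,
    sum_lines_ip_cube, hC2, hC4, nsmul_eq_mul]
  ring

theorem card_lines_ip_eq_zero (hC2 : ip C C = 2) (hC4 : ip C Kc = -4) :
    #{L ∈ lines | ip C L = 0} = 5 := by
  have hsum := sum_lines_cubic_ip hC2 hC4 6 (-11) 6 (-1)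
  have hpt : ∀ L ∈ lines, 6 + -11 * ip C L + 6 * ip C L ^ 2 + -1 * ip C L ^ 3 =
      if ip C L = 0 then 6 else 0 := by
    intro L hL
    obtain ⟨h0, h3⟩ := (isLine_iff_mem_lines.2 hL).ip_mem_Icc hC2 hC4
    interval_cases ip C L <;> rfl
  rw [sum_congr rfl hpt, ← sum_filter, sum_const, nsmul_eq_mul] at hsum
  omega

theorem card_lines_ip_eq_three (hC2 : ip C C = 2) (hC4 : ip C Kc = -4) :
    #{L ∈ lines | ip C L = 3} = 2 := by
  have hsum := sum_lines_cubic_ip hC2 hC4 0 2 (-3) 1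
  have hpt : ∀ L ∈ lines, 0 + 2 * ip C L + -3 * ip C L ^ 2 + 1 * ip C L ^ 3 =
      if ip C L = 3 then 6 else 0 := by
    intro L hL
    obtain ⟨h0, h3⟩ := (isLine_iff_mem_lines.2 hL).ip_mem_Icc hC2 hC4
    interval_cases ip C L <;> rfl
  rw [sum_congr rfl hpt, ← sum_filter, sum_const, nsmul_eq_mul] at hsum
  omega

theorem ip_eq_one_of_isFiber_add_eq (hC2 : ip C C = 2) {F G : Lam} (hF : IsFiber F)
    (hG : IsFiber G) (hFG : F + G = C) : ip C F = 1 := by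
  subst hFG
  simp only [ip_add_left, ip_add_right, hF.1, hG.1, ip_comm G F] at hC2 ⊢
  omega

theorem isFiber_sub_of_ip_eq_one (hC2 : ip C C = 2) (hC4 : ip C Kc = -4) {F : Lam}
    (hF : IsFiber F) (hFC : ip C F = 1) : IsFiber (C - F) := by
  have := ip_comm C F
  constructor
  · simp only [ip_sub_left, ip_sub_right, hF.1]; omega
  · simp only [ip_sub_left, hC4, hF.2]; norm_num

theorem sub_ne_self_of_isFiber (hC2 : ip C C = 2) {F : Lam} (hF : IsFiber F) : C - F ≠ F := by
  intro h
  rw [sub_eq_iff_eq_add.mp h] at hC2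
  simp only [ip_add_left, ip_add_right, hF.1] at hC2
  omega

theorem exists_isFiber_ip_eq_one (hC2 : ip C C = 2) (hC4 : ip C Kc = -4) :
    ∃ F, IsFiber F ∧ ip C F = 1 := by
  obtain ⟨L, hL⟩ : ({L ∈ lines | ip C L = 3} : Finset Lam).Nonempty := by
    rw [← card_pos, card_lines_ip_eq_three hC2 hC4]; norm_num
  rw [mem_filter, ← isLine_iff_mem_lines] at hL
  refine ⟨-Kc - L, ?_, ?_⟩
  · rw [isFiber_iff_isLine_neg_Kc_sub, sub_sub_cancel]; exact hL.1
  · rw [ip_sub_right, ip_neg_right, hC4, hL.2]; norm_num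

theorem eq_or_eq_sub_of_isFiber_ip_eq_one (hC2 : ip C C = 2) (hC4 : ip C Kc = -4) {F F' : Lam}
    (hF : IsFiber F) (hFC : ip C F = 1) (hF' : IsFiber F') (hF'C : ip C F' = 1) :
    F' = F ∨ F' = C - F := by
  have hmem : ∀ G, IsFiber G → ip C G = 1 → -Kc - G ∈ ({L ∈ lines | ip C L = 3} : Finset Lam) := by
    intro G hG hGC
    rw [mem_filter, ← isLine_iff_mem_lines, ← isFiber_iff_isLine_neg_Kc_sub, ip_sub_right,
      ip_neg_right, hC4, hGC]
    exact ⟨hG, by norm_num⟩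
  have hG := isFiber_sub_of_ip_eq_one hC2 hC4 hF hFC
  have hGC : ip C (C - F) = 1 := by rw [ip_sub_right, hC2, hFC]; norm_num
  have hpair : ({L ∈ lines | ip C L = 3} : Finset Lam) = {-Kc - F, -Kc - (C - F)} := by
    refine (eq_of_subset_of_card_le ?_ ?_).symm
    · simp only [insert_subset_iff, singleton_subset_iff]
      exact ⟨hmem F hF hFC, hmem _ hG hGC⟩
    · rw [card_lines_ip_eq_three hC2 hC4, card_pair]
      simpa using (sub_ne_self_of_isFiber hC2 hF).symm
  have h := hmem F' hF' hF'C
  rw [hpair, mem_insert, mem_singleton, sub_right_inj, sub_right_inj] at h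
  exact h

theorem setOf_isFiber_add_eq (hC2 : ip C C = 2) (hC4 : ip C Kc = -4) {F : Lam} (hF : IsFiber F)
    (hFC : ip C F = 1) :
    {p : Lam × Lam | IsFiber p.1 ∧ IsFiber p.2 ∧ p.1 + p.2 = C} = {(F, C - F), (C - F, F)} := by
  have hG := isFiber_sub_of_ip_eq_one hC2 hC4 hF hFC
  ext ⟨F', G'⟩
  simp only [Set.mem_ofPred_eq, Set.mem_insert_iff, Set.mem_singleton_iff, Prod.mk.injEq]
  constructor
  · rintro ⟨hF', hG', hsum⟩
    have hG'eq : G' = C - F' := eq_sub_of_add_eq' hsum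
    rcases eq_or_eq_sub_of_isFiber_ip_eq_one hC2 hC4 hF hFC hF'
      (ip_eq_one_of_isFiber_add_eq hC2 hF' hG' hsum) with rfl | rfl
    · exact Or.inl ⟨rfl, hG'eq⟩
    · exact Or.inr ⟨rfl, by rw [hG'eq, sub_sub_cancel]⟩
  · rintro (⟨rfl, rfl⟩ | ⟨rfl, rfl⟩)
    · exact ⟨hF, hG, add_sub_cancel _ _⟩
    · exact ⟨hG, hF, sub_add_cancel _ _⟩

theorem IsLine.ip_eq_zero_of_ne (hC2 : ip C C = 2) {E E' : Lam} (hE : IsLine E)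
    (hE' : IsLine E') (hEC : ip C E = 0) (hE'C : ip C E' = 0) (hne : E ≠ E') : ip E E' = 0 := by
  have hpos : 0 < ip C C := by rw [hC2]; norm_num
  have hsub := ip_self_neg_of_ip_eq_zero hpos (x := E - E')
    (by rw [ip_sub_left, ip_comm, hEC, ip_comm, hE'C]; norm_num) (sub_ne_zero.mpr hne)
  have hadd := ip_self_neg_of_ip_eq_zero hpos (x := E + E')
    (by rw [ip_add_left, ip_comm, hEC, ip_comm, hE'C]; norm_num)
    (fun h => by
      have := ip_add_left E E' Kc
      rw [h, hE.2, hE'.2] at this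
      simp [ip] at this)
  have := ip_comm E' E
  simp only [ip_add_left, ip_add_right, ip_sub_left, ip_sub_right, hE.1, hE'.1] at hsub hadd
  omega

theorem IsLine.ip_eq_zero_of_isFiber (hC2 : ip C C = 2) (hC4 : ip C Kc = -4) {E F : Lam}
    (hE : IsLine E) (hEC : ip C E = 0) (hF : IsFiber F) (hFC : ip C F = 1) :
    ip E F = 0 ∧ ip E (C - F) = 0 := by
  have h1 := hE.ip_nonneg_of_isFiber hF
  have h2 := hE.ip_nonneg_of_isFiber (isFiber_sub_of_ip_eq_one hC2 hC4 hF hFC)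
  have := ip_comm C E
  rw [ip_sub_right] at h2 ⊢
  omega

theorem add_sum_ip_smul_eq (hC2 : ip C C = 2) (hC4 : ip C Kc = -4) {F : Lam} (hF : IsFiber F)
    (hFC : ip C F = 1) (D : Lam) :
    D + ∑ E ∈ lines with ip C E = 0, ip D E • E = ip D F • (C - F) + ip D (C - F) • F := by
  set s : Finset Lam := {E ∈ lines | ip C E = 0}
  have hs : ∀ E ∈ s, IsLine E ∧ ip C E = 0 := fun E hE => by
    rwa [mem_filter, ← isLine_iff_mem_lines] at hE
  have hFF : ip F (C - F) = 1 := by rw [ip_sub_right, hF.1, ip_comm, hFC]; norm_num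
  have hGG : ip (C - F) (C - F) = 0 := (isFiber_sub_of_ip_eq_one hC2 hC4 hF hFC).1
  have hEF : ∀ E ∈ s, ip E F = 0 ∧ ip E (C - F) = 0 := fun E hE =>
    (hs E hE).1.ip_eq_zero_of_isFiber hC2 hC4 (hs E hE).2 hF hFC
  have hcard : Fintype.card (Fin 2 ⊕ s) = 7 := by
    rw [Fintype.card_sum, Fintype.card_fin, Fintype.card_coe, card_lines_ip_eq_zero hC2 hC4]
  have hdual := sum_ip_smul_eq_self_of_dual hcard (Sum.elim ![F, C - F] (↑))
    (Sum.elim ![C - F, F] fun E => -↑E) ?_ D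
  · simp only [Fintype.sum_sum_type, Fin.sum_univ_two, Sum.elim_inl, Sum.elim_inr,
      Matrix.cons_val_zero, Matrix.cons_val_one, smul_neg, sum_neg_distrib, ip_comm _ D,
      sum_coe_sort s fun E => ip D E • E] at hdual
    nth_rewrite 1 [← hdual]
    abel
  rintro (i | ⟨E, hE⟩) (j | ⟨E', hE'⟩)
  · fin_cases i <;> fin_cases j <;> simp [hF.1, hFF, hGG, ip_comm (C - F) F]
  · fin_cases i <;> simp [ip_neg_right, ip_comm _ E', hEF E' hE']
  · fin_cases j <;> simp [hEF E hE]
  · simp only [Sum.elim_inr, ip_neg_right, Sum.inr.injEq, Subtype.mk.injEq]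
    split_ifs with h
    · subst h; rw [(hs E hE).1.1]; norm_num
    · rw [(hs E hE).1.ip_eq_zero_of_ne hC2 (hs E' hE').1 (hs E hE).2 (hs E' hE').2 h, neg_zero]

end

/-- For ⟨C,C⟩ = 2, ⟨C,K⟩ = −4 and any D:
D + Σ_{E line, ⟨C,E⟩=0} ⟨D,E⟩·E = Σ_{(F,G) fibers, F+G=C} ⟨D,F⟩·G. -/
theorem assoc_identity_genus0 :
    ∀ C : Lam, ip C C = 2 → ip C Kc = -4 →
    {E : Lam | IsLine E ∧ ip C E = 0}.Finite ∧
    {p : Lam × Lam | IsFiber p.1 ∧ IsFiber p.2 ∧ p.1 + p.2 = C}.Finite ∧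
    ∀ D : Lam,
      D + ∑ᶠ E ∈ {E : Lam | IsLine E ∧ ip C E = 0}, ip D E • E =
      ∑ᶠ p ∈ {p : Lam × Lam | IsFiber p.1 ∧ IsFiber p.2 ∧ p.1 + p.2 = C},
        ip D p.1 • p.2 := by
  intro C hC2 hC4
  obtain ⟨F, hF, hFC⟩ := exists_isFiber_ip_eq_one hC2 hC4
  have hlines : {E : Lam | IsLine E ∧ ip C E = 0} = ↑({E ∈ lines | ip C E = 0} : Finset Lam) := by
    ext E
    simp [isLine_iff_mem_lines]
  rw [hlines, setOf_isFiber_add_eq hC2 hC4 hF hFC]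
  refine ⟨finite_toSet _, Set.toFinite _, fun D => ?_⟩
  have hne : (F, C - F) ≠ (C - F, F) := fun h =>
    sub_ne_self_of_isFiber hC2 hF (Prod.mk.inj h).1.symm
  rw [finsum_mem_coe_finset, finsum_mem_pair hne]
  exact add_sum_ip_smul_eq hC2 hC4 hF hFC D
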